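/- (One-step network descent inequality.) Let m, d ≥ 1; for i = 1,…,m let f_i : ℝ^d → ℝ be differentiable with L_i-Lipschitz gradient, set L := (1/m)∑_i L_i and f := (1/m)∑_i f_i; let r : ℝ^d → ℝ be convex and u := f + r. Let W = (w_ij) be an m×m doubly stochastic matrix with nonnegative entries, and set w_mx := ∑_{i=1}^m max_j w_ij. Let α > 0, ξ > 0, and let x_1,…,x_m, y_1,…,y_m ∈ ℝ^d; for each i let x_i^{1/2} be a global minimizer over ℝ^d of z ↦ r(z) + (1/(2α))‖z − (x_i − α y_i)‖², and set x_i⁺ := ∑_{j=1}^m w_ij x_j^{1/2}. Let x̄ := (1/m)∑_i x_i and ȳ := (1/m)∑_i y_i. Then ∑_{i=1}^m u(x_i⁺) ≤ ∑_{i=1}^m u(x_i) − (1/α − L/2 − ξ/2)·∑_{i=1}^m ‖x_i^{1/2} − x_i‖² + (1/(2ξ))·∑_{i=1}^m ‖∇f(x_i) − y_i‖² + 4·L·w_mx·( ∑_{i=1}^m ‖x_i − x̄‖² + α²·∑_{i=1}^m ‖y_i − ȳ‖² ). -/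

import Mathlib

/-!
Each agent's proximal step decreases `u` up to the usual error terms: the descent lemma for the
`L`-smooth average `f` bounds `f (x_i^{1/2})`, the optimality condition of the proximal problem
bounds `r (x_i^{1/2})`, and Young's inequality with parameter `ξ` absorbs the tracking error
`∇f(x_i) - y_i`. Mixing with the doubly stochastic `W` costs nothing for the convex `r` (Jensen)
and at most `(L/2) ∑_i ∑_j w_ij ‖x_j^{1/2} - x_i⁺‖²` for `f` (the lower descent lemma around
`x_i⁺`). The proximal map is nonexpansive, so this spread of the `x_j^{1/2}` is controlled by the
spread of the `x_j - α y_j` around `x̄ - α ȳ`, which yields `4 L (∑ ‖x_i - x̄‖² + α² ∑ ‖y_i - ȳ‖²)`;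
finally `w_mx ≥ 1` because every column of `W` sums to `1`.
-/

open Finset Filter Topology
open scoped RealInnerProductSpace

variable {F : Type*} [NormedAddCommGroup F] [InnerProductSpace ℝ F]

lemma norm_sub_sq_le (a b : F) : ‖a - b‖ ^ 2 ≤ 2 * ‖a‖ ^ 2 + 2 * ‖b‖ ^ 2 := by
  linarith [parallelogram_law_with_norm ℝ a b, sq_nonneg ‖a + b‖]

lemma real_inner_le_inv_mul_norm_sq_add_mul_norm_sq {ξ : ℝ} (hξ : 0 < ξ) (p q : F) :
    ⟪p, q⟫ ≤ 1 / (2 * ξ) * ‖p‖ ^ 2 + ξ / 2 * ‖q‖ ^ 2 := by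
  have hsq : 1 / (2 * ξ) * ‖p‖ ^ 2 + ξ / 2 * ‖q‖ ^ 2 - ‖p‖ * ‖q‖
      = (‖p‖ - ξ * ‖q‖) ^ 2 / (2 * ξ) := by
    field_simp
    ring
  linarith [real_inner_le_norm p q, show 0 ≤ (‖p‖ - ξ * ‖q‖) ^ 2 / (2 * ξ) by positivity]

lemma nonneg_of_norm_sub_le_mul_norm_sub {E E' : Type*} [NormedAddCommGroup E] [Nontrivial E]
    [SeminormedAddCommGroup E'] {Φ : E → E'} {K : ℝ} (h : ∀ a b, ‖Φ a - Φ b‖ ≤ K * ‖a - b‖) :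
    0 ≤ K := by
  obtain ⟨a, ha⟩ := exists_ne (0 : E)
  have := h a 0
  rw [sub_zero] at this
  exact nonneg_of_mul_nonneg_left ((norm_nonneg _).trans this) (norm_pos_iff.2 ha)

lemma norm_smul_sum_sub_smul_sum_le {E ι : Type*} [SeminormedAddCommGroup E] [Fintype ι]
    {Φ : ι → E → F} {K : ι → ℝ} (h : ∀ i a b, ‖Φ i a - Φ i b‖ ≤ K i * ‖a - b‖)
    {c : ℝ} (hc : 0 ≤ c) (a b : E) :
    ‖c⁻¹ • ∑ i, Φ i a - c⁻¹ • ∑ i, Φ i b‖ ≤ (∑ i, K i) / c * ‖a - b‖ := by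
  rw [← smul_sub, ← sum_sub_distrib, norm_smul, Real.norm_of_nonneg (inv_nonneg.2 hc),
    div_eq_inv_mul, mul_assoc, sum_mul]
  gcongr
  exact (norm_sum_le _ _).trans (sum_le_sum fun i _ => h i a b)

section Smooth

variable [CompleteSpace F] {g : F → ℝ} {G : F → F} {K : ℝ}

lemma hasGradientAt_sum_div {ι : Type*} [Fintype ι] {f : ι → F → ℝ} {z : F}
    (hf : ∀ i, DifferentiableAt ℝ (f i) z) (c : ℝ) :
    HasGradientAt (fun w => (∑ i, f i w) / c) (c⁻¹ • ∑ i, gradient (f i) z) z := by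
  rw [hasGradientAt_iff_hasFDerivAt, map_smul, map_sum]
  simp only [toDual_gradient, div_eq_mul_inv]
  exact (HasFDerivAt.fun_sum fun i _ => (hf i).hasFDerivAt).mul_const c⁻¹

lemma HasGradientAt.neg {f : F → ℝ} {f' x : F} (h : HasGradientAt f f' x) :
    HasGradientAt (fun w => -f w) (-f') x := by
  rw [hasGradientAt_iff_hasFDerivAt, map_neg]
  exact (hasGradientAt_iff_hasFDerivAt.1 h).neg

lemma le_add_inner_add_of_lipschitz_gradient (hG : ∀ z, HasGradientAt g (G z) z)
    (hlip : ∀ a b, ‖G a - G b‖ ≤ K * ‖a - b‖) (a b : F) :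
    g b ≤ g a + ⟪G a, b - a⟫ + K / 2 * ‖b - a‖ ^ 2 := by
  set v := b - a
  set ψ : ℝ → ℝ := fun t => g (a + t • v) - t * ⟪G a, v⟫ - K / 2 * t ^ 2 * ‖v‖ ^ 2
  have hψ : ∀ t, HasDerivAt ψ (⟪G (a + t • v) - G a, v⟫ - K * t * ‖v‖ ^ 2) t := by
    intro t
    have hline : HasDerivAt (fun s : ℝ => a + s • v) v t := by
      simpa using ((hasDerivAt_id t).smul_const v).const_add a
    have hg := (hasGradientAt_iff_hasFDerivAt.1 (hG (a + t • v))).comp_hasDerivAt t hline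
    rw [InnerProductSpace.toDual_apply_apply] at hg
    refine ((hg.sub ((hasDerivAt_id t).mul_const ⟪G a, v⟫)).sub
      (((hasDerivAt_pow 2 t).const_mul (K / 2)).mul_const (‖v‖ ^ 2))).congr_deriv ?_
    rw [inner_sub_left]
    norm_num only [one_mul]
    ring
  have hψ_anti : AntitoneOn ψ (Set.Icc 0 1) := by
    refine antitoneOn_of_hasDerivWithinAt_nonpos (convex_Icc 0 1)
      (fun t _ => (hψ t).continuousAt.continuousWithinAt) (fun t _ => (hψ t).hasDerivWithinAt)
      fun t ht => ?_
    rw [interior_Icc] at ht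
    have hGt : ‖G (a + t • v) - G a‖ ≤ K * t * ‖v‖ := by
      simpa [norm_smul, abs_of_pos ht.1, mul_assoc] using hlip (a + t • v) a
    have := (real_inner_le_norm _ v).trans (mul_le_mul_of_nonneg_right hGt (norm_nonneg v))
    linarith
  have h10 : ψ 1 ≤ ψ 0 :=
    hψ_anti (Set.left_mem_Icc.2 zero_le_one) (Set.right_mem_Icc.2 zero_le_one) zero_le_one
  norm_num [ψ, v] at h10
  linarith

lemma abs_sub_sub_inner_le_of_lipschitz_gradient (hG : ∀ z, HasGradientAt g (G z) z)
    (hlip : ∀ a b, ‖G a - G b‖ ≤ K * ‖a - b‖) (a b : F) :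
    |g b - g a - ⟪G a, b - a⟫| ≤ K / 2 * ‖b - a‖ ^ 2 := by
  have hupper := le_add_inner_add_of_lipschitz_gradient hG hlip a b
  have hlower := le_add_inner_add_of_lipschitz_gradient (fun z => (hG z).neg)
    (K := K) (fun a b => by rw [neg_sub_neg, norm_sub_rev]; exact hlip a b) a b
  rw [inner_neg_left] at hlower
  exact abs_le.2 ⟨by linarith, by linarith⟩

end Smooth

section Prox

variable {s : Set F} {r : F → ℝ} {c : ℝ}

lemma ConvexOn.add_inner_le_of_isMinOn_add_mul_norm_sub_sq (hr : ConvexOn ℝ s r) {p a z : F}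
    (ha : a ∈ s) (hz : z ∈ s) (hmin : IsMinOn (fun w => r w + c * ‖w - p‖ ^ 2) s a) :
    r a + 2 * c * ⟪a - p, a - z⟫ ≤ r z := by
  have hsegment : ∀ t ∈ Set.Ioc (0 : ℝ) 1,
      r a + 2 * c * ⟪a - p, a - z⟫ - c * t * ‖z - a‖ ^ 2 ≤ r z := by
    rintro t ⟨ht₀, ht₁⟩
    have hw : (1 - t) • a + t • z - p = (a - p) + t • (z - a) := by
      rw [sub_smul, one_smul, smul_sub]; abel
    have hconv : r ((1 - t) • a + t • z) ≤ (1 - t) * r a + t * r z :=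
      hr.2 ha hz (sub_nonneg.2 ht₁) ht₀.le (sub_add_cancel 1 t)
    have hmin_w : r a + c * ‖a - p‖ ^ 2
        ≤ r ((1 - t) • a + t • z) + c * ‖(1 - t) • a + t • z - p‖ ^ 2 :=
      hmin (hr.1 ha hz (sub_nonneg.2 ht₁) ht₀.le (sub_add_cancel 1 t))
    rw [hw, norm_add_sq_real, real_inner_smul_right, norm_smul, Real.norm_of_nonneg ht₀.le]
      at hmin_w
    have hflip : ⟪a - p, z - a⟫ = -⟪a - p, a - z⟫ := by rw [← inner_neg_right, neg_sub]
    have : 0 ≤ t * (r z - r a - 2 * c * ⟪a - p, a - z⟫ + c * t * ‖z - a‖ ^ 2) := by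
      rw [hflip] at hmin_w; nlinarith
    linarith [nonneg_of_mul_nonneg_right this ht₀]
  have hlim : Tendsto (fun t => r a + 2 * c * ⟪a - p, a - z⟫ - c * t * ‖z - a‖ ^ 2) (𝓝[>] 0)
      (𝓝 (r a + 2 * c * ⟪a - p, a - z⟫)) := by
    refine tendsto_nhdsWithin_of_tendsto_nhds ?_
    simpa using ((continuous_const.mul continuous_id).mul continuous_const).tendsto 0
      |>.const_sub (r a + 2 * c * ⟪a - p, a - z⟫)
  exact le_of_tendsto hlim (eventually_of_mem (Ioc_mem_nhdsGT zero_lt_one) hsegment)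

lemma ConvexOn.norm_sub_le_of_isMinOn_add_mul_norm_sub_sq (hr : ConvexOn ℝ s r) (hc : 0 < c)
    {p₁ p₂ a₁ a₂ : F} (ha₁ : a₁ ∈ s) (ha₂ : a₂ ∈ s)
    (hmin₁ : IsMinOn (fun w => r w + c * ‖w - p₁‖ ^ 2) s a₁)
    (hmin₂ : IsMinOn (fun w => r w + c * ‖w - p₂‖ ^ 2) s a₂) :
    ‖a₁ - a₂‖ ≤ ‖p₁ - p₂‖ := by
  have h₁ := hr.add_inner_le_of_isMinOn_add_mul_norm_sub_sq ha₁ ha₂ hmin₁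
  have h₂ := hr.add_inner_le_of_isMinOn_add_mul_norm_sub_sq ha₂ ha₁ hmin₂
  have hsum : ⟪a₁ - p₁, a₁ - a₂⟫ + ⟪a₂ - p₂, a₂ - a₁⟫ = ‖a₁ - a₂‖ ^ 2 - ⟪p₁ - p₂, a₁ - a₂⟫ := by
    rw [← neg_sub a₁ a₂, inner_neg_right, ← sub_eq_add_neg, ← inner_sub_left,
      ← real_inner_self_eq_norm_sq, ← inner_sub_left]
    congr 1; abel
  have hsq : ‖a₁ - a₂‖ ^ 2 ≤ ‖p₁ - p₂‖ * ‖a₁ - a₂‖ :=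
    (le_of_sub_nonpos (by nlinarith)).trans (real_inner_le_norm _ _)
  nlinarith [norm_nonneg (a₁ - a₂), norm_nonneg (p₁ - p₂)]

end Prox

section Mixing

variable {ι : Type*} [Fintype ι]

lemma sum_sum_mul_eq_sum_of_sum_col_eq_one {W : Matrix ι ι ℝ} (hcol : ∀ j, ∑ i, W i j = 1)
    (q : ι → ℝ) : ∑ i, ∑ j, W i j * q j = ∑ j, q j := by
  rw [sum_comm]
  simp only [← sum_mul, hcol, one_mul]

lemma norm_sum_smul_sq_le {w : ι → ℝ} (hw₀ : ∀ i, 0 ≤ w i) (hw₁ : ∑ i, w i = 1) (a : ι → F) :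
    ‖∑ i, w i • a i‖ ^ 2 ≤ ∑ i, w i * ‖a i‖ ^ 2 := by
  simpa using ((convexOn_norm convex_univ).pow (fun _ _ => norm_nonneg _) 2).map_sum_le
    (fun i _ => hw₀ i) hw₁ (fun i _ => Set.mem_univ (a i))

lemma sum_mul_norm_sub_sum_smul_sq_le {w : ι → ℝ} (hw₀ : ∀ i, 0 ≤ w i) (hw₁ : ∑ i, w i = 1)
    (a : ι → F) :
    ∑ j, w j * ‖a j - ∑ k, w k • a k‖ ^ 2 ≤ ∑ j, ∑ k, w j * w k * ‖a j - a k‖ ^ 2 := by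
  refine sum_le_sum fun j _ => ?_
  have hcenter : a j - ∑ k, w k • a k = ∑ k, w k • (a j - a k) := by
    simp only [smul_sub, sum_sub_distrib, ← sum_smul, hw₁, one_smul]
  rw [hcenter]
  simp_rw [mul_assoc, ← mul_sum]
  exact mul_le_mul_of_nonneg_left (norm_sum_smul_sq_le hw₀ hw₁ _) (hw₀ j)

lemma sum_mul_norm_sub_sum_smul_sq_le_of_norm_sub_le {w : ι → ℝ} (hw₀ : ∀ i, 0 ≤ w i)
    (hw₁ : ∑ i, w i = 1) {a v : ι → F} (hav : ∀ j k, ‖a j - a k‖ ≤ ‖v j - v k‖) (c : F) :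
    ∑ j, w j * ‖a j - ∑ k, w k • a k‖ ^ 2 ≤ 4 * ∑ j, w j * ‖v j - c‖ ^ 2 := by
  have hpair : ∀ j k, ‖a j - a k‖ ^ 2 ≤ 2 * ‖v j - c‖ ^ 2 + 2 * ‖v k - c‖ ^ 2 := fun j k => by
    have := norm_sub_sq_le (v j - c) (v k - c)
    rw [sub_sub_sub_cancel_right] at this
    exact (pow_le_pow_left₀ (norm_nonneg _) (hav j k) 2).trans this
  calc _ ≤ ∑ j, ∑ k, w j * w k * ‖a j - a k‖ ^ 2 := sum_mul_norm_sub_sum_smul_sq_le hw₀ hw₁ a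
    _ ≤ ∑ j, ∑ k, w j * w k * (2 * ‖v j - c‖ ^ 2 + 2 * ‖v k - c‖ ^ 2) := by
      gcongr with j _ k _
      · exact mul_nonneg (hw₀ j) (hw₀ k)
      · exact hpair j k
    _ = 4 * ∑ j, w j * ‖v j - c‖ ^ 2 := by
      simp only [mul_add, sum_add_distrib]
      rw [sum_comm (f := fun j k => w j * w k * (2 * ‖v k - c‖ ^ 2))]
      simp only [mul_comm (w _) (w _), mul_assoc, ← mul_sum, ← sum_mul, hw₁, one_mul,
        mul_left_comm (w _) 2]
      ring

lemma sum_sum_mul_norm_sub_sq_le_of_norm_sub_le {W : Matrix ι ι ℝ} (hW₀ : ∀ i j, 0 ≤ W i j)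
    (hrow : ∀ i, ∑ j, W i j = 1) (hcol : ∀ j, ∑ i, W i j = 1) {a v : ι → F}
    (hav : ∀ j k, ‖a j - a k‖ ≤ ‖v j - v k‖) (c : F) :
    ∑ i, ∑ j, W i j * ‖a j - ∑ k, W i k • a k‖ ^ 2 ≤ 4 * ∑ j, ‖v j - c‖ ^ 2 := by
  calc _ ≤ ∑ i, 4 * ∑ j, W i j * ‖v j - c‖ ^ 2 := sum_le_sum fun i _ =>
        sum_mul_norm_sub_sum_smul_sq_le_of_norm_sub_le (hW₀ i) (hrow i) hav c
    _ = _ := by rw [← mul_sum, sum_sum_mul_eq_sum_of_sum_col_eq_one hcol]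

lemma one_le_sum_sup'_of_sum_col_eq_one {W : Matrix ι ι ℝ} (hne : (univ : Finset ι).Nonempty)
    (hcol : ∀ j, ∑ i, W i j = 1) : 1 ≤ ∑ i, univ.sup' hne (fun j => W i j) := by
  obtain ⟨j, hj⟩ := id hne
  calc (1 : ℝ) = ∑ i, W i j := (hcol j).symm
    _ ≤ _ := sum_le_sum fun i _ => le_sup' (fun j => W i j) hj

lemma sum_norm_sub_smul_sub_sq_le (x y : ι → F) (x₀ y₀ : F) (α : ℝ) :
    ∑ j, ‖(x j - α • y j) - (x₀ - α • y₀)‖ ^ 2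
      ≤ 2 * (∑ j, ‖x j - x₀‖ ^ 2 + α ^ 2 * ∑ j, ‖y j - y₀‖ ^ 2) := by
  rw [mul_sum, mul_add, mul_sum, mul_sum, ← sum_add_distrib]
  refine sum_le_sum fun j _ => ?_
  have := norm_sub_sq_le (x j - x₀) (α • (y j - y₀))
  rw [norm_smul, mul_pow, Real.norm_eq_abs, sq_abs] at this
  rw [show (x j - α • y j) - (x₀ - α • y₀) = (x j - x₀) - α • (y j - y₀) by
    rw [smul_sub]; abel]
  linarith

end Mixing

section Descent

variable {ι : Type*} [Fintype ι] [CompleteSpace F] {g : F → ℝ} {G : F → F} {K : ℝ} {s : Set F}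
  {r : F → ℝ}

lemma add_le_of_isMinOn_prox_gradient (hG : ∀ z, HasGradientAt g (G z) z)
    (hlip : ∀ a b, ‖G a - G b‖ ≤ K * ‖a - b‖) (hr : ConvexOn ℝ s r) {α ξ : ℝ} (hα : 0 < α)
    (hξ : 0 < ξ) {x y xh : F} (hx : x ∈ s) (hxh : xh ∈ s)
    (hmin : IsMinOn (fun z => r z + 1 / (2 * α) * ‖z - (x - α • y)‖ ^ 2) s xh) :
    g xh + r xh ≤ g x + r x - (1 / α - K / 2 - ξ / 2) * ‖xh - x‖ ^ 2
      + 1 / (2 * ξ) * ‖G x - y‖ ^ 2 := by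
  have hsmooth := (abs_le.1 (abs_sub_sub_inner_le_of_lipschitz_gradient hG hlip x xh)).2
  have hprox := hr.add_inner_le_of_isMinOn_add_mul_norm_sub_sq hxh hx hmin
  have hyoung := real_inner_le_inv_mul_norm_sq_add_mul_norm_sq hξ (G x - y) (xh - x)
  have hexpand : 2 * (1 / (2 * α)) * ⟪xh - (x - α • y), xh - x⟫
      = 1 / α * ‖xh - x‖ ^ 2 + ⟪y, xh - x⟫ := by
    rw [show xh - (x - α • y) = (xh - x) + α • y by abel, inner_add_left,
      real_inner_smul_left, real_inner_self_eq_norm_sq]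
    field_simp
  rw [inner_sub_left] at hyoung
  rw [hexpand] at hprox
  linarith

lemma add_le_sum_mul_add_of_lipschitz_gradient (hG : ∀ z, HasGradientAt g (G z) z)
    (hlip : ∀ a b, ‖G a - G b‖ ≤ K * ‖a - b‖) (hr : ConvexOn ℝ s r) {w : ι → ℝ}
    (hw₀ : ∀ i, 0 ≤ w i) (hw₁ : ∑ i, w i = 1) {a : ι → F} (ha : ∀ j, a j ∈ s) :
    g (∑ j, w j • a j) + r (∑ j, w j • a j)
      ≤ ∑ j, w j * (g (a j) + r (a j) + K / 2 * ‖a j - ∑ k, w k • a k‖ ^ 2) := by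
  set b := ∑ k, w k • a k with hb
  have hsmooth : ∀ j, g b + ⟪G b, a j - b⟫ ≤ g (a j) + K / 2 * ‖a j - b‖ ^ 2 := fun j => by
    linarith [(abs_le.1 (abs_sub_sub_inner_le_of_lipschitz_gradient hG hlip b (a j))).1]
  have hbalance : ∑ j, w j * ⟪G b, a j - b⟫ = 0 := by
    simp_rw [← real_inner_smul_right, ← inner_sum, smul_sub, sum_sub_distrib, ← sum_smul, hw₁,
      one_smul, ← hb, sub_self, inner_zero_right]
  have hg : g b = ∑ j, w j * (g b + ⟪G b, a j - b⟫) := by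
    simp only [mul_add, sum_add_distrib, ← sum_mul, hw₁, one_mul, hbalance, add_zero]
  have hjensen : r b ≤ ∑ j, w j * r (a j) := by
    simpa using hr.map_sum_le (fun j _ => hw₀ j) hw₁ (fun j _ => ha j)
  calc g b + r b ≤ ∑ j, w j * (g b + ⟪G b, a j - b⟫) + ∑ j, w j * r (a j) := by
        rw [← hg]; gcongr
    _ ≤ ∑ j, w j * (g (a j) + K / 2 * ‖a j - b‖ ^ 2) + ∑ j, w j * r (a j) :=
        add_le_add (sum_le_sum fun j _ => mul_le_mul_of_nonneg_left (hsmooth j) (hw₀ j)) le_rfl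
    _ = _ := by
        rw [← sum_add_distrib]
        exact sum_congr rfl fun j _ => by ring

lemma sum_add_le_of_lipschitz_gradient {W : Matrix ι ι ℝ} (hG : ∀ z, HasGradientAt g (G z) z)
    (hlip : ∀ a b, ‖G a - G b‖ ≤ K * ‖a - b‖) (hr : ConvexOn ℝ s r) (hW₀ : ∀ i j, 0 ≤ W i j)
    (hrow : ∀ i, ∑ j, W i j = 1) (hcol : ∀ j, ∑ i, W i j = 1) {a : ι → F} (ha : ∀ j, a j ∈ s) :
    ∑ i, (g (∑ j, W i j • a j) + r (∑ j, W i j • a j))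
      ≤ ∑ j, (g (a j) + r (a j)) + K / 2 * ∑ i, ∑ j, W i j * ‖a j - ∑ k, W i k • a k‖ ^ 2 := by
  calc _ ≤ ∑ i, ∑ j, W i j * (g (a j) + r (a j) + K / 2 * ‖a j - ∑ k, W i k • a k‖ ^ 2) :=
        sum_le_sum fun i _ =>
          add_le_sum_mul_add_of_lipschitz_gradient hG hlip hr (hW₀ i) (hrow i) ha
    _ = _ := by
        simp only [mul_add, sum_add_distrib, sum_sum_mul_eq_sum_of_sum_col_eq_one hcol,
          mul_left_comm _ (K / 2), ← mul_sum]

end Descent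

/-- One-step network descent inequality for the SONATA update: with `x_i^{1/2}` the
proximal points and `x_i⁺ = ∑_j w_ij x_j^{1/2}`,
`∑ u(x_i⁺) ≤ ∑ u(x_i) − (1/α − L/2 − ξ/2) ∑ ‖x_i^{1/2} − x_i‖²
  + (1/(2ξ)) ∑ ‖∇f(x_i) − y_i‖² + 4 L w_mx (∑ ‖x_i − x̄‖² + α² ∑ ‖y_i − ȳ‖²)`. -/
theorem stmt16 (m d : ℕ) (hm : 1 ≤ m) (hd : 1 ≤ d)
    (f : Fin m → EuclideanSpace ℝ (Fin d) → ℝ) (Lf : Fin m → ℝ)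
    (hdiff : ∀ i, Differentiable ℝ (f i))
    (hlip : ∀ i, ∀ a b : EuclideanSpace ℝ (Fin d),
      ‖gradient (f i) a - gradient (f i) b‖ ≤ Lf i * ‖a - b‖)
    (L : ℝ) (hL : L = (∑ i, Lf i) / m)
    (r : EuclideanSpace ℝ (Fin d) → ℝ) (hr : ConvexOn ℝ Set.univ r)
    (u : EuclideanSpace ℝ (Fin d) → ℝ) (hu : u = fun z => (∑ i, f i z) / m + r z)
    (W : Matrix (Fin m) (Fin m) ℝ)
    (hWnn : ∀ i j, 0 ≤ W i j)
    (hWrow : ∀ i, ∑ j, W i j = 1) (hWcol : ∀ j, ∑ i, W i j = 1)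
    (wmx : ℝ)
    (hwmx : wmx = ∑ i, Finset.univ.sup' ⟨⟨0, hm⟩, Finset.mem_univ _⟩ (fun j => W i j))
    (α ξ : ℝ) (hα : 0 < α) (hξ : 0 < ξ)
    (x y xh xp : Fin m → EuclideanSpace ℝ (Fin d))
    (hprox : ∀ i, IsMinOn
      (fun z => r z + (1 / (2 * α)) * ‖z - (x i - α • y i)‖ ^ 2) Set.univ (xh i))
    (hxp : ∀ i, xp i = ∑ j, W i j • xh j) :
    ∑ i, u (xp i) ≤
      ∑ i, u (x i) - (1 / α - L / 2 - ξ / 2) * ∑ i, ‖xh i - x i‖ ^ 2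
      + (1 / (2 * ξ)) * ∑ i, ‖gradient (fun z => (∑ j, f j z) / m) (x i) - y i‖ ^ 2
      + 4 * L * wmx * (∑ i, ‖x i - (m : ℝ)⁻¹ • ∑ j, x j‖ ^ 2
          + α ^ 2 * ∑ i, ‖y i - (m : ℝ)⁻¹ • ∑ j, y j‖ ^ 2) := by
  have : Nonempty (Fin d) := ⟨⟨0, hd⟩⟩
  set g := fun z => (∑ j, f j z) / (m : ℝ)
  set G := fun z => (m : ℝ)⁻¹ • ∑ j, gradient (f j) z
  set xbar := (m : ℝ)⁻¹ • ∑ j, x j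
  set ybar := (m : ℝ)⁻¹ • ∑ j, y j
  have hG : ∀ z, HasGradientAt g (G z) z :=
    fun z => hasGradientAt_sum_div (fun j => (hdiff j).differentiableAt) m
  have hGlip : ∀ a b, ‖G a - G b‖ ≤ L * ‖a - b‖ := by
    rw [hL]; exact norm_smul_sum_sub_smul_sum_le hlip m.cast_nonneg
  have hL₀ : 0 ≤ L := nonneg_of_norm_sub_le_mul_norm_sub hGlip
  have hwmx₁ : 1 ≤ wmx := hwmx ▸ one_le_sum_sup'_of_sum_col_eq_one _ hWcol
  have hstep := sum_le_sum fun i (_ : i ∈ univ) =>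
    add_le_of_isMinOn_prox_gradient hG hGlip hr hα hξ (Set.mem_univ (x i)) (Set.mem_univ (xh i))
      (hprox i)
  have hmix := sum_add_le_of_lipschitz_gradient hG hGlip hr hWnn hWrow hWcol
    (fun j => Set.mem_univ (xh j))
  have hspread := sum_sum_mul_norm_sub_sq_le_of_norm_sub_le hWnn hWrow hWcol (a := xh)
    (fun j k => hr.norm_sub_le_of_isMinOn_add_mul_norm_sub_sq (by positivity) (Set.mem_univ _)
      (Set.mem_univ _) (hprox j) (hprox k))
    (xbar - α • ybar)
  have hdisp := sum_norm_sub_smul_sub_sq_le x y xbar ybar α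
  have hu' : ∀ z, u z = g z + r z := congrFun hu
  simp only [← hxp] at hmix hspread
  simp only [hu', sum_add_distrib, sum_sub_distrib, ← mul_sum, gradient_eq hG] at hstep hmix ⊢
  set V := ∑ i, ‖x i - xbar‖ ^ 2 + α ^ 2 * ∑ i, ‖y i - ybar‖ ^ 2
  have hconsensus := mul_le_mul_of_nonneg_left (hspread.trans (by linarith [hdisp]) :
    _ ≤ 8 * V) (by positivity : 0 ≤ L / 2)
  have hwmx_V := mul_le_mul_of_nonneg_left hwmx₁ (by positivity : 0 ≤ 4 * L * V)
  linarith
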